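/- For MV-Sketch with r = log₂(1/δ) rows and w = 2/ε columns using independent pairwise-independent hash functions per row, for any flow x, the query estimate satisfies Ŝ(x) ≤ S(x) + εS/2 with probability at least 1 − δ. -/

import Mathlib

/-- State of a bucket in MV-Sketch: total value `V`, candidate key `K`,
indicator counter `C`. -/
structure Bucket (α : Type*) where
  V : ℝ
  K : α
  C : ℝ

/-- One update of the generalized majority vote algorithm on input `(y, v)`. -/
noncomputable def Bucket.step {α : Type*} [DecidableEq α] (b : Bucket α) (p : α × ℝ) :
    Bucket α :=
  if p.1 = b.K then ⟨b.V + p.2, b.K, b.C + p.2⟩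
  else if b.C - p.2 < 0 then ⟨b.V + p.2, p.1, p.2 - b.C⟩
  else ⟨b.V + p.2, b.K, b.C - p.2⟩

/-- State of the bucket after processing the whole stream `l`, starting from
an arbitrary initial key `k0`, `V = 0`, `C = 0`. -/
noncomputable def runBucket {α : Type*} [DecidableEq α] (k0 : α) (l : List (α × ℝ)) :
    Bucket α :=
  l.foldl Bucket.step ⟨0, k0, 0⟩

/-- Total value of flow `x` in the stream `l`. -/
def flowSum {α : Type*} [DecidableEq α] (x : α) (l : List (α × ℝ)) : ℝ :=
  ((l.filter fun p => p.1 = x).map Prod.snd).sum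

open MeasureTheory ProbabilityTheory
open Finset
open scoped ENNReal

/-!
In a row, the bucket of `x` receives all of the mass `S(x)` of `x` plus the mass `Z` of the
flows colliding with `x`. The majority-vote invariant `K = x → C ≤ S(x)` bounds the row estimate
by `(V + S(x)) / 2 = S(x) + Z / 2`. Pairwise independence makes each collision happen with
probability at most `1 / w`, so `E Z ≤ S / w = εS / 2`, and by Markov a row overshoots
`S(x) + εS / 2` with probability at most `1 / 2`; independent rows all overshoot with probability
at most `2⁻ʳ = δ`. The hash functions are not assumed measurable, but a collision event is null
measurable: the fibres of `ω ↦ (h y, h x)` have outer measures summing to `1`.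
-/

namespace Bucket

variable {α : Type*} [DecidableEq α]

noncomputable def estimate (b : Bucket α) (x : α) : ℝ :=
  if b.K = x then (b.V + b.C) / 2 else (b.V - b.C) / 2

lemma step_V (b : Bucket α) (p : α × ℝ) : (b.step p).V = b.V + p.2 := by
  unfold step; split_ifs <;> rfl

lemma step_C_nonneg {b : Bucket α} {p : α × ℝ} (hC : 0 ≤ b.C) (hp : 0 ≤ p.2) :
    0 ≤ (b.step p).C := by
  unfold step; split_ifs <;> dsimp only <;> linarith

lemma step_C_le {b : Bucket α} {p : α × ℝ} {x : α} {a : ℝ} (ha : 0 ≤ a) (hC : 0 ≤ b.C)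
    (hp : 0 ≤ p.2) (hK : b.K = x → b.C ≤ a) :
    (b.step p).K = x → (b.step p).C ≤ a + if p.1 = x then p.2 else 0 := by
  unfold step
  split_ifs <;> dsimp only <;> intro hx <;> grind

end Bucket

section Deterministic

variable {α : Type*} [DecidableEq α]

lemma flowSum_cons (x : α) (p : α × ℝ) (l : List (α × ℝ)) :
    flowSum x (p :: l) = (if p.1 = x then p.2 else 0) + flowSum x l := by
  by_cases h : p.1 = x <;> simp [flowSum, h]

lemma flowSum_nonneg (x : α) {l : List (α × ℝ)} (hv : ∀ p ∈ l, 0 ≤ p.2) :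
    0 ≤ flowSum x l :=
  List.sum_nonneg fun _ hy => by
    obtain ⟨p, hp, rfl⟩ := List.mem_map.1 hy
    exact hv p (List.mem_of_mem_filter hp)

lemma foldl_step_V (l : List (α × ℝ)) (b : Bucket α) :
    (l.foldl Bucket.step b).V = b.V + (l.map Prod.snd).sum := by
  induction l generalizing b with
  | nil => simp
  | cons p l ih =>
    simp only [List.foldl_cons, ih, Bucket.step_V, List.map_cons, List.sum_cons]
    ring

lemma foldl_step_C (x : α) {l : List (α × ℝ)} (hv : ∀ p ∈ l, 0 ≤ p.2) {b : Bucket α} {a : ℝ}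
    (ha : 0 ≤ a) (hC : 0 ≤ b.C) (hK : b.K = x → b.C ≤ a) :
    0 ≤ (l.foldl Bucket.step b).C ∧
      ((l.foldl Bucket.step b).K = x → (l.foldl Bucket.step b).C ≤ a + flowSum x l) := by
  induction l generalizing b a with
  | nil => exact ⟨hC, by simpa [flowSum] using hK⟩
  | cons p l ih =>
    have hp := hv p List.mem_cons_self
    have ha' : 0 ≤ a + if p.1 = x then p.2 else 0 := by split_ifs <;> linarith
    obtain ⟨hC', hK'⟩ := ih (fun q hq => hv q (List.mem_cons_of_mem _ hq)) ha'
      (Bucket.step_C_nonneg hC hp) (Bucket.step_C_le ha hC hp hK)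
    exact ⟨hC', fun h => (hK' h).trans_eq (by rw [flowSum_cons]; ring)⟩

lemma runBucket_V (k0 : α) (l : List (α × ℝ)) : (runBucket k0 l).V = (l.map Prod.snd).sum := by
  simp [runBucket, foldl_step_V]

lemma estimate_runBucket_le (k0 x : α) {l : List (α × ℝ)} (hv : ∀ p ∈ l, 0 ≤ p.2) :
    (runBucket k0 l).estimate x ≤ ((l.map Prod.snd).sum + flowSum x l) / 2 := by
  obtain ⟨hC, hK⟩ : 0 ≤ (runBucket k0 l).C ∧
      ((runBucket k0 l).K = x → (runBucket k0 l).C ≤ 0 + flowSum x l) :=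
    foldl_step_C x hv le_rfl le_rfl fun _ => le_rfl
  have hx := flowSum_nonneg x hv
  rw [Bucket.estimate, runBucket_V]
  split_ifs with h
  · linarith [hK h]
  · linarith

lemma flowSum_filter (P : α → Prop) [DecidablePred P] (y : α) (l : List (α × ℝ)) :
    flowSum y (l.filter fun p => P p.1) = if P y then flowSum y l else 0 := by
  induction l with
  | nil => simp [flowSum]
  | cons p l ih =>
    by_cases hp : P p.1 <;> by_cases hy : P y <;>
      simp_all [flowSum_cons] <;> grind

variable [Fintype α]

lemma sum_snd_eq_sum_flowSum (l : List (α × ℝ)) : (l.map Prod.snd).sum = ∑ y, flowSum y l := by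
  induction l with
  | nil => simp [flowSum]
  | cons p l ih => simp [flowSum_cons, Finset.sum_add_distrib, ih]

def collisionMass {β : Type*} [DecidableEq β] (h : α → β) (x : α) (l : List (α × ℝ)) : ℝ :=
  ∑ y ∈ univ.erase x, if h y = h x then flowSum y l else 0

variable {β : Type*} [DecidableEq β]

lemma estimate_le_flowSum_add_collisionMass (h : α → β) (k0 x : α) {l : List (α × ℝ)}
    (hv : ∀ p ∈ l, 0 ≤ p.2) :
    (runBucket k0 (l.filter fun p => h p.1 = h x)).estimate x ≤
      flowSum x l + collisionMass h x l / 2 := by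
  refine (estimate_runBucket_le k0 x fun p hp => hv p (List.mem_of_mem_filter hp)).trans_eq ?_
  rw [sum_snd_eq_sum_flowSum, collisionMass, ← add_sum_erase _ _ (mem_univ x)]
  simp only [flowSum_filter (fun y => h y = h x), if_true]
  ring

lemma collisionMass_le (h : α → β) (x : α) {l : List (α × ℝ)} (hv : ∀ p ∈ l, 0 ≤ p.2) :
    collisionMass h x l ≤ (l.map Prod.snd).sum := by
  rw [sum_snd_eq_sum_flowSum]
  calc collisionMass h x l ≤ ∑ y ∈ univ.erase x, flowSum y l :=
        sum_le_sum fun y _ => by split_ifs <;> simp [flowSum_nonneg y hv]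
    _ ≤ ∑ y, flowSum y l :=
        sum_le_sum_of_subset_of_nonneg (erase_subset _ _) fun y _ _ => flowSum_nonneg y hv

end Deterministic

section Measure

variable {Ω : Type*} [MeasurableSpace Ω] {μ : Measure Ω}

/-- Cover `s` and `sᶜ` by measurable hulls: their overlap is null, and it contains the gap
between `s` and its hull. -/
lemma nullMeasurableSet_of_measure_add_measure_compl_le [IsFiniteMeasure μ] {s : Set Ω}
    (h : μ s + μ sᶜ ≤ μ Set.univ) : NullMeasurableSet s μ := by
  set t := toMeasurable μ s
  set u := toMeasurable μ sᶜ
  have htu : t ∪ u = Set.univ :=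
    Set.eq_univ_of_univ_subset fun ω _ => by
      by_cases hω : ω ∈ s
      exacts [Or.inl (subset_toMeasurable μ s hω), Or.inr (subset_toMeasurable μ sᶜ hω)]
  have hoverlap : μ (t ∩ u) = 0 := by
    have := measure_union_add_inter (μ := μ) t (measurableSet_toMeasurable μ sᶜ)
    rw [htu, measure_toMeasurable, measure_toMeasurable] at this
    refine nonpos_iff_eq_zero.1 <| (ENNReal.add_le_add_iff_left (measure_ne_top μ Set.univ)).1 ?_
    rw [add_zero, this]
    exact h
  have hgap : μ (t \ s) = 0 :=
    measure_mono_null (show t \ s ⊆ t ∩ u from fun ω hω =>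
      ⟨hω.1, subset_toMeasurable μ sᶜ hω.2⟩) hoverlap
  have : t \ (t \ s) = s := Set.sdiff_sdiff_cancel_left (subset_toMeasurable μ s)
  exact this ▸ (measurableSet_toMeasurable μ s).nullMeasurableSet.diff (.of_null hgap)

lemma nullMeasurableSet_preimage_of_sum_measure_fiber_le {β : Type*} [Fintype β]
    [IsFiniteMeasure μ] (f : Ω → β) (h : ∑ b, μ (f ⁻¹' {b}) ≤ μ Set.univ) (t : Set β) :
    NullMeasurableSet (f ⁻¹' t) μ := by
  classical
  have hcover : ∀ t : Set β, μ (f ⁻¹' t) ≤ ∑ b ∈ univ.filter (· ∈ t), μ (f ⁻¹' {b}) := by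
    intro t
    refine le_trans (measure_mono fun ω hω => ?_) (measure_biUnion_finset_le _ _)
    exact Set.mem_biUnion (mem_filter.2 ⟨mem_univ (f ω), hω⟩) rfl
  refine nullMeasurableSet_of_measure_add_measure_compl_le (le_trans ?_ h)
  rw [← sum_filter_add_sum_filter_not univ (· ∈ t)]
  exact add_le_add (hcover t)
    (by simpa only [Set.preimage_compl, Set.mem_compl_iff] using hcover tᶜ)

lemma mul_meas_ge_sum_indicator_le {ι : Type*} (s : Finset ι) {A : ι → Set Ω}
    (hA : ∀ i ∈ s, NullMeasurableSet (A i) μ) (c : ι → ℝ≥0∞) (t : ℝ≥0∞) :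
    t * μ {ω | t ≤ ∑ i ∈ s, (A i).indicator (fun _ => c i) ω} ≤ ∑ i ∈ s, c i * μ (A i) := by
  have hmeas : ∀ i ∈ s, AEMeasurable ((A i).indicator fun _ => c i) μ := fun i hi =>
    aemeasurable_const.indicator₀ (hA i hi)
  refine (mul_meas_ge_le_lintegral₀ (Finset.aemeasurable_fun_sum _ hmeas) t).trans_eq ?_
  rw [lintegral_finsetSum' _ hmeas]
  exact sum_congr rfl fun i hi => lintegral_indicator_const₀ (hA i hi) (c i)

lemma ProbabilityTheory.iIndepFun.measure_iInter_preimage_le_pow {ι β : Type*} [Fintype ι]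
    [MeasurableSpace β] {f : ι → Ω → β} (hf : iIndepFun f μ) {s : Set β} (hs : MeasurableSet s)
    {p : ℝ≥0∞} (hp : ∀ i, μ (f i ⁻¹' s) ≤ p) : μ (⋂ i, f i ⁻¹' s) ≤ p ^ Fintype.card ι := by
  have := hf.measure_inter_preimage_eq_mul univ (sets := fun _ => s) fun _ _ => hs
  simp only [mem_univ, Set.iInter_true] at this
  rw [this, ← card_univ, ← prod_const]
  exact prod_le_prod' fun i _ => hp i

end Measure

lemma ofReal_collisionMass {Ω α : Type*} [Fintype α] [DecidableEq α] {w : ℕ}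
    {H : Ω → α → Fin w} (x : α) {l : List (α × ℝ)} (hv : ∀ p ∈ l, 0 ≤ p.2) (ω : Ω) :
    ENNReal.ofReal (collisionMass (H ω) x l) = ∑ y ∈ univ.erase x,
      {ω | H ω y = H ω x}.indicator (fun _ => ENNReal.ofReal (flowSum y l)) ω := by
  rw [collisionMass, ENNReal.ofReal_sum_of_nonneg fun y _ => by
    split_ifs <;> simp [flowSum_nonneg y hv]]
  refine sum_congr rfl fun y _ => ?_
  by_cases h : H ω y = H ω x <;> simp [h]

section Hash

variable {Ω : Type*} [MeasurableSpace Ω] {μ : Measure Ω} [IsProbabilityMeasure μ]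
  {α : Type*} {w : ℕ} {H : Ω → α → Fin w}

lemma measure_hash_eq_hash_le (hw : w ≠ 0)
    (huniform : ∀ y j, μ {ω | H ω y = j} = (w : ℝ≥0∞)⁻¹)
    (hpair : ∀ y z, y ≠ z → ∀ j j',
      μ {ω | H ω y = j ∧ H ω z = j'} = μ {ω | H ω y = j} * μ {ω | H ω z = j'})
    {y z : α} (hyz : y ≠ z) :
    NullMeasurableSet {ω | H ω y = H ω z} μ ∧ μ {ω | H ω y = H ω z} ≤ (w : ℝ≥0∞)⁻¹ := by
  have hw' : (w : ℝ≥0∞) * (w : ℝ≥0∞)⁻¹ = 1 :=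
    ENNReal.mul_inv_cancel (Nat.cast_ne_zero.2 hw) (ENNReal.natCast_ne_top w)
  have hfiber : ∀ q : Fin w × Fin w,
      μ ((fun ω => (H ω y, H ω z)) ⁻¹' {q}) = (w : ℝ≥0∞)⁻¹ * (w : ℝ≥0∞)⁻¹ := fun q => by
    simp only [Set.preimage, Set.mem_singleton_iff, Prod.ext_iff]
    rw [hpair y z hyz, huniform, huniform]
  constructor
  · refine nullMeasurableSet_preimage_of_sum_measure_fiber_le (μ := μ)
      (fun ω => (H ω y, H ω z)) (le_of_eq ?_)
      {q : Fin w × Fin w | q.1 = q.2}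
    simp only [hfiber, sum_const, card_univ, Fintype.card_prod, Fintype.card_fin, nsmul_eq_mul,
      Nat.cast_mul, measure_univ]
    rw [mul_mul_mul_comm, hw', one_mul]
  · have hunion : {ω | H ω y = H ω z} = ⋃ j, (fun ω => (H ω y, H ω z)) ⁻¹' {(j, j)} := by
      ext ω
      simp only [Set.mem_iUnion, Set.mem_preimage, Set.mem_singleton_iff, Prod.ext_iff,
        Set.mem_ofPred_eq]
      exact ⟨fun h => ⟨H ω z, h, rfl⟩, fun ⟨_, hy, hz⟩ => hy.trans hz.symm⟩
    rw [hunion]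
    refine (measure_iUnion_fintype_le μ _).trans_eq ?_
    simp only [hfiber, sum_const, card_univ, Fintype.card_fin, nsmul_eq_mul]
    rw [← mul_assoc, hw', one_mul]

/-- Markov's inequality for the collision mass, whose mean is at most `S / w`. -/
lemma measure_flowSum_add_lt_estimate_le_half [Fintype α] [DecidableEq α] (hw : w ≠ 0)
    (huniform : ∀ y j, μ {ω | H ω y = j} = (w : ℝ≥0∞)⁻¹)
    (hpair : ∀ y z, y ≠ z → ∀ j j',
      μ {ω | H ω y = j ∧ H ω z = j'} = μ {ω | H ω y = j} * μ {ω | H ω z = j'})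
    (k0 x : α) {l : List (α × ℝ)} (hv : ∀ p ∈ l, 0 ≤ p.2) :
    μ {ω | flowSum x l + (l.map Prod.snd).sum / w <
      (runBucket k0 (l.filter fun p => H ω p.1 = H ω x)).estimate x} ≤ 2⁻¹ := by
  set S := (l.map Prod.snd).sum
  have hwpos : (0 : ℝ) < w := Nat.cast_pos.2 (Nat.pos_of_ne_zero hw)
  have hfail : ∀ ω, flowSum x l + S / w <
      (runBucket k0 (l.filter fun p => H ω p.1 = H ω x)).estimate x →
      2 * (S / w) < collisionMass (H ω) x l := fun ω hω => by
    linarith [estimate_le_flowSum_add_collisionMass (H ω) k0 x hv]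
  have hS0 : 0 ≤ S := List.sum_nonneg fun _ hq => by
    obtain ⟨p, hp, rfl⟩ := List.mem_map.1 hq
    exact hv p hp
  rcases hS0.eq_or_lt with hS | hS
  · refine (measure_mono_null (fun ω hω => ?_) measure_empty).trans_le zero_le
    have := hfail ω hω
    linarith [collisionMass_le (H ω) x hv, div_nonneg hS.le hwpos.le]
  set t := ENNReal.ofReal (S / w)
  have ht0 : t ≠ 0 := by simpa [t] using div_pos hS hwpos
  have hcoll := fun y (hy : y ∈ univ.erase x) =>
    measure_hash_eq_hash_le hw huniform hpair (ne_of_mem_erase hy)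
  have hmarkov := mul_meas_ge_sum_indicator_le (univ.erase x) (fun y hy => (hcoll y hy).1)
    (fun y => ENNReal.ofReal (flowSum y l)) (2 * t)
  have hmean : ∑ y ∈ univ.erase x, ENNReal.ofReal (flowSum y l) * μ {ω | H ω y = H ω x} ≤ t :=
    calc _ ≤ ∑ y ∈ univ.erase x, ENNReal.ofReal (flowSum y l) * (w : ℝ≥0∞)⁻¹ :=
          sum_le_sum fun y hy => mul_le_mul_right (hcoll y hy).2 _
      _ ≤ ∑ y, ENNReal.ofReal (flowSum y l) * (w : ℝ≥0∞)⁻¹ :=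
          sum_le_sum_of_subset (erase_subset _ _)
      _ = t := by
          rw [← sum_mul, ← ENNReal.ofReal_sum_of_nonneg fun y _ => flowSum_nonneg y hv,
            ← sum_snd_eq_sum_flowSum, show t = _ from ENNReal.ofReal_div_of_pos hwpos,
            ENNReal.ofReal_natCast, div_eq_mul_inv]
  have hsub : {ω | flowSum x l + S / w <
      (runBucket k0 (l.filter fun p => H ω p.1 = H ω x)).estimate x} ⊆
      {ω | 2 * t ≤ ∑ y ∈ univ.erase x,
        {ω | H ω y = H ω x}.indicator (fun _ => ENNReal.ofReal (flowSum y l)) ω} := by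
    intro ω hω
    rw [Set.mem_ofPred_eq, ← ofReal_collisionMass x hv, ← ENNReal.ofReal_ofNat 2,
      ← ENNReal.ofReal_mul zero_le_two]
    exact ENNReal.ofReal_le_ofReal (hfail ω hω).le
  refine (measure_mono hsub).trans (ENNReal.le_inv_iff_mul_le.2 ?_)
  rw [← ENNReal.mul_le_mul_iff_right ht0 ENNReal.ofReal_ne_top, mul_one, mul_comm _ 2,
    ← mul_assoc, mul_comm t 2]
  exact hmarkov.trans hmean

end Hash

theorem point_query_error_bound_general {Ω : Type*} [MeasurableSpace Ω]
    (μ : Measure Ω) [IsProbabilityMeasure μ]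
    (n r w : ℕ) (hr : 0 < r)
    (ε δ : ℝ) (hε0 : 0 < ε)
    (hδ : δ = (1 / 2 : ℝ) ^ r) (hwε : (w : ℝ) = 2 / ε)
    (l : List (Fin n × ℝ)) (hv : ∀ p ∈ l, 0 ≤ p.2) (k0 x : Fin n)
    (g : Ω → Fin r → Fin n → Fin w)
    (hrows : iIndepFun (fun i ω => g ω i) μ)
    (huniform : ∀ i y j, μ {ω | g ω i y = j} = ENNReal.ofReal (1 / (w : ℝ)))
    (hpair : ∀ (i : Fin r) (y z : Fin n), y ≠ z → ∀ j j',
      μ {ω | g ω i y = j ∧ g ω i z = j'} =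
        μ {ω | g ω i y = j} * μ {ω | g ω i z = j'}) :
    haveI : Nonempty (Fin r) := Fin.pos_iff_nonempty.mp hr
    ENNReal.ofReal (1 - δ) ≤
      μ {ω |
        Finset.univ.inf' Finset.univ_nonempty (fun i : Fin r =>
          if (runBucket k0 (l.filter fun p => g ω i p.1 = g ω i x)).K = x then
            ((runBucket k0 (l.filter fun p => g ω i p.1 = g ω i x)).V +
              (runBucket k0 (l.filter fun p => g ω i p.1 = g ω i x)).C) / 2
          else
            ((runBucket k0 (l.filter fun p => g ω i p.1 = g ω i x)).V -
              (runBucket k0 (l.filter fun p => g ω i p.1 = g ω i x)).C) / 2)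
          ≤ flowSum x l + ε * (l.map Prod.snd).sum / 2} := by
  have hwpos : (0 : ℝ) < w := hwε ▸ div_pos two_pos hε0
  have hw : w ≠ 0 := by exact_mod_cast hwpos.ne'
  have hthreshold : ε * (l.map Prod.snd).sum / 2 = (l.map Prod.snd).sum / w := by
    rw [hwε]; field_simp
  have hrow : ∀ i, μ ((fun ω => g ω i) ⁻¹' {h | flowSum x l + (l.map Prod.snd).sum / w <
      (runBucket k0 (l.filter fun p => h p.1 = h x)).estimate x}) ≤ 2⁻¹ := fun i =>
    measure_flowSum_add_lt_estimate_le_half hw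
      (fun y j => by
        rw [huniform, one_div, ENNReal.ofReal_inv_of_pos hwpos, ENNReal.ofReal_natCast])
      (hpair i) k0 x hv
  have hfail := hrows.measure_iInter_preimage_le_pow (Set.toFinite _).measurableSet hrow
  rw [Fintype.card_fin] at hfail
  refine le_trans ?_ (tsub_le_iff_right.2 (measure_univ_le_add_compl _))
  rw [measure_univ, hδ, ENNReal.ofReal_sub _ (by positivity), ENNReal.ofReal_one,
    ENNReal.ofReal_pow (by norm_num), one_div, ENNReal.ofReal_inv_of_pos two_pos,
    ENNReal.ofReal_ofNat]
  refine tsub_le_tsub_left (le_trans (measure_mono fun ω hω => ?_) hfail) 1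
  simp only [Set.mem_compl_iff, Set.mem_ofPred_eq, not_le, Finset.lt_inf'_iff, Finset.mem_univ,
    true_implies, hthreshold] at hω
  exact Set.mem_iInter.2 hω

/-- Point-query error bound of MV-Sketch. With `r = log₂(1/δ)` rows of
`w = 2/ε` buckets, mutually independent rows, and a pairwise-independent
uniform hash function per row, for any flow `x` the query estimate (the
minimum over rows of the row estimates) satisfies
`Ŝ(x) ≤ S(x) + ε𝒮/2` with probability at least `1 − δ`, where `𝒮` is the
total sum of all values in the stream. -/
theorem point_query_error_bound {Ω : Type*} [MeasurableSpace Ω]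
    (μ : Measure Ω) [IsProbabilityMeasure μ]
    (n r w : ℕ) (hr : 0 < r) (hw : 0 < w)
    (ε δ : ℝ) (hε0 : 0 < ε) (hε1 : ε < 1)
    (hδ : δ = (1 / 2 : ℝ) ^ r) (hwε : (w : ℝ) = 2 / ε)
    (l : List (Fin n × ℝ)) (hv : ∀ p ∈ l, 0 ≤ p.2) (k0 x : Fin n)
    (g : Ω → Fin r → Fin n → Fin w)
    (hrows : iIndepFun (fun i ω => g ω i) μ)
    (huniform : ∀ i y j, μ {ω | g ω i y = j} = ENNReal.ofReal (1 / (w : ℝ)))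
    (hpair : ∀ (i : Fin r) (y z : Fin n), y ≠ z → ∀ j j',
      μ {ω | g ω i y = j ∧ g ω i z = j'} =
        μ {ω | g ω i y = j} * μ {ω | g ω i z = j'}) :
    haveI : Nonempty (Fin r) := Fin.pos_iff_nonempty.mp hr
    ENNReal.ofReal (1 - δ) ≤
      μ {ω |
        Finset.univ.inf' Finset.univ_nonempty (fun i : Fin r =>
          if (runBucket k0 (l.filter fun p => g ω i p.1 = g ω i x)).K = x then
            ((runBucket k0 (l.filter fun p => g ω i p.1 = g ω i x)).V +
              (runBucket k0 (l.filter fun p => g ω i p.1 = g ω i x)).C) / 2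
          else
            ((runBucket k0 (l.filter fun p => g ω i p.1 = g ω i x)).V -
              (runBucket k0 (l.filter fun p => g ω i p.1 = g ω i x)).C) / 2)
          ≤ flowSum x l + ε * (l.map Prod.snd).sum / 2} :=
  point_query_error_bound_general μ n r w hr ε δ hε0 hδ hwε l hv k0 x g hrows huniform hpair
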